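/- If (q;A,B) simulates Φ and (p;B,C) simulates Ψ, then (p⋆q; A, C) simulates Ψ⋆Φ, where (p⋆q)_{x,a}(z,s,r) = Σ_y p_{y,s}(z,r) q_{x,a}(y,s). -/
import Mathlib

/-- If `(q;A,B)` simulates the adaptive instrument `Φ` and `(p;B,C)` simulates `Ψ`, then
`(p⋆q; A, C)` simulates `Ψ⋆Φ`, where
`(p⋆q)_{x,a}(z,s,r) = Σ_y p_{y,s}(z,r) q_{x,a}(y,s)` and `(Ψ⋆Φ)_a^{s,r} = Ψ_s^r ∘ Φ_a^s`. -/
theorem simulation_adaptive_composition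
    {X Y Z Γ Sig Θ : Type} [Fintype X] [Fintype Y] [Fintype Z]
    [Fintype Γ] [Fintype Sig] [Fintype Θ]
    {dH dK dL : Type} [Fintype dH] [DecidableEq dH] [Fintype dK] [DecidableEq dK]
    [Fintype dL] [DecidableEq dL]
    (Φ : Γ → Sig → Matrix dH dH ℂ →ₗ[ℂ] Matrix dK dK ℂ)
    (Ψ : Sig → Θ → Matrix dK dK ℂ →ₗ[ℂ] Matrix dL dL ℂ)
    (A : X → Matrix dH dH ℂ) (B : Y → Matrix dK dK ℂ) (C : Z → Matrix dL dL ℂ)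
    (q : X × Γ → Y × Sig → ℝ) (p : Y × Sig → Z × Θ → ℝ)
    (hq : ∀ x a s, (Φ a s) (A x) = ∑ y, (q (x, a) (y, s) : ℂ) • B y)
    (hp : ∀ y s r, (Ψ s r) (B y) = ∑ z, (p (y, s) (z, r) : ℂ) • C z) :
    ∀ x a s r, (Ψ s r) ((Φ a s) (A x)) =
      ∑ z, ((∑ y, p (y, s) (z, r) * q (x, a) (y, s) : ℝ) : ℂ) • C z := by
  intro x a s r
  rw [hq x a s, map_sum]
  simp only [map_smul, hp, Finset.smul_sum, smul_smul]
  rw [Finset.sum_comm]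
  refine Finset.sum_congr rfl fun z _ => ?_
  rw [← Finset.sum_smul]
  push_cast
  rw [Finset.sum_congr rfl fun y _ => mul_comm ((q (x, a) (y, s) : ℂ)) _]
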